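/- For fixed v > 0, the Rayleigh-normal distribution function Z_v is monotonically increasing in μ: if μ < τ then Z_v(μ) ≤ Z_v(τ). -/

import Mathlib

noncomputable def normalPDF (μ v x : ℝ) : ℝ :=
  (Real.sqrt (2 * Real.pi * v))⁻¹ * Real.exp (-(x - μ)^2 / (2 * v))

noncomputable def normalCDF (μ v x : ℝ) : ℝ :=
  ∫ t in Set.Iio x, normalPDF μ v t

/-- The set of fidelities appearing in the definition of the Rayleigh-normal
distribution function: `A` runs over continuously differentiable monotone increasing
functions with `Φ ≤ A ≤ 1`. -/
noncomputable def RNFidelities (μ v : ℝ) : Set ℝ :=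
  {r | ∃ A : ℝ → ℝ, ContDiff ℝ 1 A ∧ Monotone A ∧
    (∀ x, normalCDF 0 1 x ≤ A x) ∧ (∀ x, A x ≤ 1) ∧
    r = ∫ x : ℝ, Real.sqrt (deriv A x * normalPDF μ v x)}

/-- The Rayleigh-normal distribution function `Z_v(μ)`. -/
noncomputable def RayleighNormal (v μ : ℝ) : ℝ :=
  1 - (sSup (RNFidelities μ v))^2

/-! Shifting the mean from `μ` to `τ > μ` amounts to replacing `A` by `A (· + (τ - μ))`, which
is again admissible because `Φ` is monotone, and leaves the fidelity unchanged by translation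
invariance of Lebesgue measure. So the fidelity set shrinks as the mean grows. It is bounded by
`1`, since `2 √(A' N) ≤ A' + N`, the total mass of `A'` is at most the length of the range of `A`,
and `N` is a probability density; hence its supremum decreases and `Z_v` increases. -/

open MeasureTheory ProbabilityTheory Real Set

theorem lintegral_ofReal_deriv_le_of_monotone {f : ℝ → ℝ} (hf : Differentiable ℝ f)
    (hmono : Monotone f) {a b : ℝ} (ha : ∀ x, a ≤ f x) (hb : ∀ x, f x ≤ b) :
    ∫⁻ x, ENNReal.ofReal (deriv f x) ≤ ENNReal.ofReal (b - a) := by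
  have hvol := lintegral_deriv_eq_volume_image_of_monotoneOn MeasurableSet.univ
    (fun x _ => (hf x).hasDerivAt.hasDerivWithinAt) (hmono.monotoneOn univ)
  rw [Measure.restrict_univ, image_univ] at hvol
  calc ∫⁻ x, ENNReal.ofReal (deriv f x) = volume (range f) := hvol
    _ ≤ volume (Icc a b) := measure_mono (range_subset_iff.2 fun x => ⟨ha x, hb x⟩)
    _ = ENNReal.ofReal (b - a) := volume_Icc

theorem two_mul_lintegral_sqrt_mul_le {α : Type*} [MeasurableSpace α] {m : Measure α}
    {f g : α → ℝ} (hf : ∀ x, 0 ≤ f x) (hg : ∀ x, 0 ≤ g x) (hg_meas : AEMeasurable g m) :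
    2 * ∫⁻ x, ENNReal.ofReal (√(f x * g x)) ∂m ≤
      ∫⁻ x, ENNReal.ofReal (f x) ∂m + ∫⁻ x, ENNReal.ofReal (g x) ∂m := by
  have hpointwise : ∀ x, 2 * ENNReal.ofReal (√(f x * g x)) ≤
      ENNReal.ofReal (f x) + ENNReal.ofReal (g x) := fun x => by
    rw [← ENNReal.ofReal_ofNat 2, ← ENNReal.ofReal_mul zero_le_two,
      ← ENNReal.ofReal_add (hf x) (hg x), sqrt_mul (hf x)]
    refine ENNReal.ofReal_le_ofReal ?_
    have := two_mul_le_add_sq √(f x) √(g x)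
    rwa [sq_sqrt (hf x), sq_sqrt (hg x), mul_assoc] at this
  rw [← lintegral_const_mul' _ _ ENNReal.ofNat_ne_top,
    ← lintegral_add_right' _ hg_meas.ennreal_ofReal]
  exact lintegral_mono hpointwise

lemma normalPDF_eq_gaussianPDFReal (μ : ℝ) {v : ℝ} (hv : 0 ≤ v) :
    normalPDF μ v = gaussianPDFReal μ ⟨v, hv⟩ := rfl

lemma normalPDF_nonneg (μ v x : ℝ) : 0 ≤ normalPDF μ v x := by
  unfold normalPDF; positivity

lemma continuous_normalPDF (μ v : ℝ) : Continuous (normalPDF μ v) := by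
  unfold normalPDF; fun_prop

lemma normalPDF_add (μ v x y : ℝ) : normalPDF μ v (x + y) = normalPDF (μ - y) v x := by
  simp only [normalPDF, sub_sub_eq_add_sub]

lemma integrable_normalPDF (μ : ℝ) {v : ℝ} (hv : 0 ≤ v) : Integrable (normalPDF μ v) := by
  rw [normalPDF_eq_gaussianPDFReal μ hv]
  exact integrable_gaussianPDFReal μ _

lemma lintegral_normalPDF (μ : ℝ) {v : ℝ} (hv : 0 < v) :
    ∫⁻ x, ENNReal.ofReal (normalPDF μ v x) = 1 := by
  rw [normalPDF_eq_gaussianPDFReal μ hv.le]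
  exact lintegral_gaussianPDFReal_eq_one μ (NNReal.coe_ne_zero.mp hv.ne')

lemma normalCDF_nonneg (μ v x : ℝ) : 0 ≤ normalCDF μ v x :=
  setIntegral_nonneg measurableSet_Iio fun t _ => normalPDF_nonneg μ v t

lemma normalCDF_le_one (μ : ℝ) {v : ℝ} (hv : 0 < v) (x : ℝ) : normalCDF μ v x ≤ 1 := by
  have hint : ∫ t, normalPDF μ v t = 1 := by
    rw [normalPDF_eq_gaussianPDFReal μ hv.le]
    exact integral_gaussianPDFReal_eq_one μ (NNReal.coe_ne_zero.mp hv.ne')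
  exact hint ▸ setIntegral_le_integral (integrable_normalPDF μ hv.le)
    (.of_forall (normalPDF_nonneg μ v))

lemma normalCDF_mono (μ : ℝ) {v : ℝ} (hv : 0 ≤ v) : Monotone (normalCDF μ v) :=
  fun _ _ hab => setIntegral_mono_set (integrable_normalPDF μ hv).integrableOn
    (.of_forall (normalPDF_nonneg μ v)) (Iio_subset_Iio hab).eventuallyLE

lemma zero_mem_RNFidelities (μ v : ℝ) : 0 ∈ RNFidelities μ v :=
  ⟨fun _ => 1, contDiff_const, monotone_const, normalCDF_le_one 0 one_pos, fun _ => le_rfl,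
    by simp⟩

lemma le_one_of_mem_RNFidelities {μ v r : ℝ} (hv : 0 < v) (hr : r ∈ RNFidelities μ v) :
    r ≤ 1 := by
  obtain ⟨A, hA, hmono, hΦ, hA_le, rfl⟩ := hr
  have hA_mass : ∫⁻ x, ENNReal.ofReal (deriv A x) ≤ 1 := by
    simpa using lintegral_ofReal_deriv_le_of_monotone (hA.differentiable one_ne_zero) hmono
      (fun x => (normalCDF_nonneg 0 1 x).trans (hΦ x)) hA_le
  have hAM := two_mul_lintegral_sqrt_mul_le (m := volume) (fun x => hmono.deriv_nonneg (x := x))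
    (normalPDF_nonneg μ v) (continuous_normalPDF μ v).aemeasurable
  rw [lintegral_normalPDF μ hv] at hAM
  have hmass : ∫⁻ x, ENNReal.ofReal (√(deriv A x * normalPDF μ v x)) ≤ 1 := by
    have := hAM.trans (add_le_add_left hA_mass 1)
    rwa [one_add_one_eq_two, ENNReal.mul_le_iff_le_inv two_ne_zero ENNReal.ofNat_ne_top,
      ENNReal.inv_mul_cancel two_ne_zero ENNReal.ofNat_ne_top] at this
  have hmeas : Measurable fun x => √(deriv A x * normalPDF μ v x) :=
    ((measurable_deriv A).mul (continuous_normalPDF μ v).measurable).sqrt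
  rw [integral_eq_lintegral_of_nonneg_ae (.of_forall fun _ => sqrt_nonneg _)
    hmeas.aestronglyMeasurable]
  exact ENNReal.toReal_le_of_le_ofReal zero_le_one (by simpa using hmass)

lemma RNFidelities_anti {μ τ : ℝ} (v : ℝ) (h : μ ≤ τ) :
    RNFidelities τ v ⊆ RNFidelities μ v := by
  rintro r ⟨A, hA, hmono, hΦ, hA_le, rfl⟩
  refine ⟨fun x => A (x + (τ - μ)), hA.comp (contDiff_id.add contDiff_const),
    fun a b hab => hmono (by linarith),
    fun x => (normalCDF_mono 0 zero_le_one (by linarith)).trans (hΦ _),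
    fun x => hA_le _, ?_⟩
  rw [← integral_add_right_eq_self _ (τ - μ)]
  simp only [deriv_comp_add_const, normalPDF_add, sub_sub_cancel]

theorem stmt12 (v μ τ : ℝ) (hv : 0 < v) (h : μ < τ) :
    RayleighNormal v μ ≤ RayleighNormal v τ := by
  have hsub := RNFidelities_anti v h.le
  have hbdd : BddAbove (RNFidelities μ v) := ⟨1, fun _ => le_one_of_mem_RNFidelities hv⟩
  have hzero := zero_mem_RNFidelities τ v
  have hsSup_le := csSup_le_csSup hbdd ⟨0, hzero⟩ hsub
  have hsSup_nonneg := le_csSup (hbdd.mono hsub) hzero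
  exact sub_le_sub_left (pow_le_pow_left₀ hsSup_nonneg hsSup_le 2) 1
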